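/- arXiv:cs/0504047 — 2 statements merged into one kernel-verified Lean document; each statement's English description precedes it below -/
import Mathlib

section
/- Let S, T be infinite sequences over a finite alphabet Σ that are both normal. Let 0 < i_1 < i_2 < ... be a sequence of indices such that the function f(j) = i_{j+1} − i_j is nondecreasing and unbounded, and form the interleaved sequence U = S[1..i_1] T[1..i_1] S[i_1+1..i_2] T[i_1+1..i_2] S[i_2+1..i_3] T[i_2+1..i_3] ⋯. Then U is normal over Σ. -/
open Filter

/-- The prefix of length `n` of the infinite sequence `S`. -/
def pre {α : Type*} (S : ℕ → α) (n : ℕ) : List α := List.ofFn fun i : Fin n => S i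

/-- The number of (possibly overlapping) occurrences of `w` as a substring of `x`. -/
def occ {α : Type*} [DecidableEq α] (w x : List α) : ℕ :=
  ((List.range x.length).filter fun i => (x.drop i).take w.length = w).length

/-- A sequence is normal if every finite string `w` occurs with limiting frequency
`|Σ|^(-|w|)`. -/
def IsNormalSeq {α : Type*} [Fintype α] [DecidableEq α] (S : ℕ → α) : Prop :=
  ∀ w : List α, Tendsto (fun n => (occ w (pre S n) : ℝ) / n) atTop
    (nhds (((Fintype.card α : ℝ) ^ w.length)⁻¹))

/-- The finite substring `S[a+1..b]` (0-indexed: characters `S a, ..., S (b-1)`). -/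
def seg {α : Type*} (S : ℕ → α) (a b : ℕ) : List α :=
  (List.range (b - a)).map fun j => S (a + j)

/-- The prefix of the interleaved sequence after `j` double blocks:
`S[1..i₁] T[1..i₁] S[i₁+1..i₂] T[i₁+1..i₂] ⋯`. -/
def interPre {α : Type*} (S T : ℕ → α) (i : ℕ → ℕ) : ℕ → List α
  | 0 => []
  | j + 1 => interPre S T i j ++ seg S (i j) (i (j + 1)) ++ seg T (i j) (i (j + 1))

/-!
Cutting a word into pieces changes the number of occurrences of `w` by at most `|w|` per cut.
Hence a prefix of `U` of length `n` that contains `j` complete double blocks has, up to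
`O(j |w|)`, as many occurrences of `w` as a prefix of `S` of length `a` and a prefix of `T` of
length `b` together, where `a + b = n`. Since the block lengths `i_{j+1} - i_j` are nondecreasing
and unbounded, `i_j` grows superlinearly, so `j = o(n)`; and normality of `S` and `T` gives
`occ w (S[1..a]) = |Σ|^{-|w|} a + o(n)` uniformly in `a ≤ n`.
-/

open Asymptotics

lemma List.take_drop_append_of_add_le {α : Type*} (x y : List α) {k m : ℕ}
    (h : k + m ≤ x.length) : ((x ++ y).drop k).take m = (x.drop k).take m := by
  rw [List.take_drop, List.take_drop, List.take_append_of_le_length h]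

lemma List.add_length_le_of_take_drop_eq {α : Type*} {w x : List α} {k : ℕ} (hk : k ≤ x.length)
    (h : (x.drop k).take w.length = w) : k + w.length ≤ x.length := by
  have := congrArg List.length h
  simp only [List.length_take, List.length_drop] at this
  omega

section occ
variable {α : Type*} [DecidableEq α] (w x y : List α)

lemma occ_append_eq :
    occ w (x ++ y) = (List.range x.length).countP
      (fun k => ((x ++ y).drop k).take w.length = w) + occ w y := by
  simp only [occ, ← List.countP_eq_length_filter, List.length_append, List.range_add,
    List.countP_append, List.countP_map]
  congr 1
  refine List.countP_congr fun k _ => ?_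
  simp only [Function.comp, decide_eq_true_eq, List.drop_length_add_append]

lemma occ_le_countP_append :
    occ w x ≤ (List.range x.length).countP (fun k => ((x ++ y).drop k).take w.length = w) := by
  rw [occ, ← List.countP_eq_length_filter]
  refine List.countP_mono_left fun k hmem hmatch => ?_
  simp only [decide_eq_true_eq] at hmatch ⊢
  have hk : k ≤ x.length := (List.mem_range.mp hmem).le
  rwa [List.take_drop_append_of_add_le x y (List.add_length_le_of_take_drop_eq hk hmatch)]

lemma countP_append_le_occ_add :
    (List.range x.length).countP (fun k => ((x ++ y).drop k).take w.length = w)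
      ≤ occ w x + w.length := by
  -- only the last `min |x| |w|` starting positions in `x` can see into `y`
  have hsplit : x.length = (x.length - w.length) + min x.length w.length := by omega
  rw [hsplit, List.range_add, List.countP_append, occ, ← List.countP_eq_length_filter]
  refine Nat.add_le_add ?_ (List.countP_le_length.trans (by simp))
  calc _ ≤ (List.range (x.length - w.length)).countP
          (fun k => (x.drop k).take w.length = w) := by
        refine List.countP_mono_left fun k hk hmatch => ?_
        rw [List.mem_range] at hk
        rwa [List.take_drop_append_of_add_le x y (by omega)] at hmatch
    _ ≤ _ := ((List.range_sublist.mpr (by omega)).countP_le)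

lemma occ_add_occ_le_occ_append : occ w x + occ w y ≤ occ w (x ++ y) := by
  rw [occ_append_eq]
  exact Nat.add_le_add_right (occ_le_countP_append w x y) _

lemma occ_append_le_occ_add_occ : occ w (x ++ y) ≤ occ w x + occ w y + w.length := by
  rw [occ_append_eq]
  linarith [countP_append_le_occ_add w x y]

lemma abs_occ_append_append_sub_le (p q r : List α) :
    |(occ w (p ++ x ++ y) : ℤ) - occ w (q ++ x) - occ w (r ++ y)|
      ≤ |(occ w p : ℤ) - occ w q - occ w r| + 2 * w.length := by
  have := occ_add_occ_le_occ_append w p x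
  have := occ_append_le_occ_add_occ w p x
  have := occ_add_occ_le_occ_append w (p ++ x) y
  have := occ_append_le_occ_add_occ w (p ++ x) y
  have := occ_add_occ_le_occ_append w q x
  have := occ_append_le_occ_add_occ w q x
  have := occ_add_occ_le_occ_append w r y
  have := occ_append_le_occ_add_occ w r y
  rw [abs_le]
  constructor <;> linarith [le_abs_self ((occ w p : ℤ) - occ w q - occ w r),
    neg_abs_le ((occ w p : ℤ) - occ w q - occ w r)]

end occ

section pre
variable {α : Type*} (S : ℕ → α)

lemma pre_eq_map (n : ℕ) : pre S n = (List.range n).map S := by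
  apply List.ext_getElem <;> simp [pre]

lemma length_seg (a b : ℕ) : (seg S a b).length = b - a := by simp [seg]

lemma pre_eq_pre_append_seg {a b : ℕ} (h : a ≤ b) : pre S b = pre S a ++ seg S a b := by
  obtain ⟨c, rfl⟩ := Nat.exists_eq_add_of_le h
  simp only [pre_eq_map, seg, List.range_add, Nat.add_sub_cancel_left, List.map_map,
    List.map_append]
  rfl

lemma take_pre {n m : ℕ} (h : n ≤ m) : (pre S m).take n = pre S n := by
  rw [pre_eq_map, pre_eq_map, ← List.map_take, List.take_range, min_eq_left h]

lemma take_seg (a b d : ℕ) : (seg S a b).take d = seg S a (a + min d (b - a)) := by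
  rw [seg, seg, Nat.add_sub_cancel_left, ← List.map_take, List.take_range]

end pre

section interleave
variable {α : Type*} (S T : ℕ → α) {i : ℕ → ℕ} (hi0 : i 0 = 0) (hi : Monotone i)
include hi0 hi

lemma length_interPre (j : ℕ) : (interPre S T i j).length = 2 * i j := by
  induction j with
  | zero => simp [interPre, hi0]
  | succ j ih =>
    have : i j ≤ i (j + 1) := hi (Nat.le_succ j)
    simp only [interPre, List.length_append, length_seg, ih]
    omega

lemma abs_occ_interPre_sub_le [DecidableEq α] (w : List α) (j : ℕ) :
    |(occ w (interPre S T i j) : ℤ) - occ w (pre S (i j)) - occ w (pre T (i j))|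
      ≤ 2 * j * w.length := by
  induction j with
  | zero => simp [interPre, hi0, pre, occ]
  | succ j ih =>
    rw [interPre, pre_eq_pre_append_seg S (hi j.le_succ), pre_eq_pre_append_seg T (hi j.le_succ)]
    refine (abs_occ_append_append_sub_le w _ _ _ _ _).trans ?_
    push_cast
    linarith

lemma pre_eq_interPre_append {U : ℕ → α} (hU : ∀ j, pre U (2 * i j) = interPre S T i j)
    {j n : ℕ} (hjn : 2 * i j ≤ n) (hnj : n < 2 * i (j + 1)) :
    ∃ a b, i j ≤ a ∧ i j ≤ b ∧ a + b = n ∧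
      pre U n = interPre S T i j ++ seg S (i j) a ++ seg T (i j) b := by
  set g := i (j + 1) - i j
  refine ⟨i j + min (n - 2 * i j) g, i j + min (n - 2 * i j - g) g, by omega, by omega,
    by omega, ?_⟩
  rw [← take_pre U hnj.le, hU, interPre, List.append_assoc, List.take_append,
    length_interPre S T hi0 hi, List.take_of_length_le (by rw [length_interPre S T hi0 hi]; omega),
    List.take_append, take_seg, take_seg, length_seg, List.append_assoc]

lemma abs_occ_pre_sub_occ_le [DecidableEq α] (w : List α) {U : ℕ → α}
    (hU : ∀ j, pre U (2 * i j) = interPre S T i j)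
    {j n : ℕ} (hjn : 2 * i j ≤ n) (hnj : n < 2 * i (j + 1)) :
    ∃ a b, a + b = n ∧
      |(occ w (pre U n) : ℤ) - occ w (pre S a) - occ w (pre T b)|
        ≤ 2 * w.length * (j + 1) := by
  obtain ⟨a, b, ha, hb, rfl, hpre⟩ := pre_eq_interPre_append S T hi0 hi hU hjn hnj
  refine ⟨a, b, rfl, ?_⟩
  rw [hpre, pre_eq_pre_append_seg S ha, pre_eq_pre_append_seg T hb]
  refine (abs_occ_append_append_sub_le w _ _ _ _ _).trans ?_
  linarith [abs_occ_interPre_sub_le S T hi0 hi w j]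

end interleave

section growth
variable {i : ℕ → ℕ}

lemma sub_mul_gap_le_sub (hi : Monotone i) (hgap : Monotone fun j => i (j + 1) - i j)
    {m j : ℕ} (hmj : m ≤ j) : (j - m) * (i (m + 1) - i m) ≤ i j - i m := by
  induction j, hmj using Nat.le_induction with
  | base => simp
  | succ j hmj ih =>
    have hgm : i (m + 1) - i m ≤ i (j + 1) - i j := hgap hmj
    have hj : i j ≤ i (j + 1) := hi (Nat.le_succ j)
    have hm : i m ≤ i j := hi hmj
    rw [Nat.sub_add_comm hmj, Nat.succ_mul]
    omega

lemma isLittleO_of_monotone_gap (hi : Monotone i) (hgap : Monotone fun j => i (j + 1) - i j)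
    (hunb : ∀ M : ℕ, ∃ j, M < i (j + 1) - i j) :
    (fun j : ℕ => (j : ℝ)) =o[atTop] (fun j => (i j : ℝ)) := by
  refine isLittleO_iff.mpr fun c hc => ?_
  obtain ⟨m, hm⟩ := hunb ⌈2 / c⌉₊
  have hcG : 2 ≤ c * (i (m + 1) - i m : ℕ) := by
    have := (Nat.lt_of_ceil_lt hm).le
    rwa [div_le_iff₀ hc, mul_comm] at this
  filter_upwards [eventually_ge_atTop (2 * m)] with j hj
  have hgrowth := sub_mul_gap_le_sub hi hgap (show m ≤ j by omega)
  simp only [Real.norm_natCast]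
  calc (j : ℝ) ≤ 2 * (j - m : ℕ) := by norm_cast; omega
    _ ≤ c * (i (m + 1) - i m : ℕ) * (j - m : ℕ) := by gcongr
    _ = c * ((j - m) * (i (m + 1) - i m) : ℕ) := by push_cast; ring
    _ ≤ c * i j := by gcongr; exact_mod_cast hgrowth.trans (Nat.sub_le _ _)

lemma StrictMono.exists_le_lt_succ {f : ℕ → ℕ} (hf : StrictMono f) {n : ℕ} (h0 : f 0 ≤ n) :
    ∃ j, f j ≤ n ∧ n < f (j + 1) := by
  have hex : ∃ k, n < f k := ⟨n + 1, (Nat.lt_succ_self n).trans_le hf.le_apply⟩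
  obtain ⟨j, hj⟩ : ∃ j, Nat.find hex = j + 1 :=
    Nat.exists_eq_succ_of_ne_zero fun h => (Nat.find_spec hex).not_ge (h ▸ h0)
  exact ⟨j, not_lt.mp (Nat.find_min hex (by omega)), hj ▸ Nat.find_spec hex⟩

lemma StrictMono.tendsto_atTop_of_lt_succ {f : ℕ → ℕ} (hf : StrictMono f) {J : ℕ → ℕ}
    (hJ : ∀ n, n < f (J n + 1)) : Tendsto J atTop atTop := by
  refine tendsto_atTop_atTop.mpr fun M => ⟨f M, fun n hn => ?_⟩
  have := hf.lt_iff_lt.mp (hn.trans_lt (hJ n))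
  omega

lemma StrictMono.isLittleO_of_lt_succ {f : ℕ → ℕ} (hf : StrictMono f)
    (hgrowth : (fun j : ℕ => (j : ℝ)) =o[atTop] (fun j => (f j : ℝ)))
    {J : ℕ → ℕ} (hJ : ∀ n, f (J n) ≤ n ∧ n < f (J n + 1)) :
    (fun n => (J n : ℝ)) =o[atTop] (fun n => (n : ℝ)) :=
  (hgrowth.comp_tendsto (hf.tendsto_atTop_of_lt_succ fun n => (hJ n).2)).trans_isBigO
    (IsBigO.of_bound' (Eventually.of_forall fun n => by
      simpa only [Function.comp, Real.norm_natCast, Nat.cast_le] using (hJ n).1))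

end growth

section asymptotics

lemma isLittleO_sub_mul_iff_tendsto_div {f : ℕ → ℝ} {c : ℝ} :
    (fun n => f n - c * n) =o[atTop] (fun n => (n : ℝ)) ↔
      Tendsto (fun n => f n / n) atTop (nhds c) := by
  rw [isLittleO_iff_tendsto'
      ((eventually_ne_atTop 0).mono fun n hn h0 => absurd (Nat.cast_eq_zero.mp h0) hn),
    ← tendsto_sub_const_iff c (f := fun n => f n / n), sub_self]
  refine tendsto_congr' ((eventually_ne_atTop 0).mono fun n hn => ?_)
  field_simp

lemma Asymptotics.IsLittleO.comp_le {u : ℕ → ℝ} (hu : u =o[atTop] (fun n => (n : ℝ)))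
    {a : ℕ → ℕ} (ha : ∀ n, a n ≤ n) : (fun n => u (a n)) =o[atTop] (fun n => (n : ℝ)) := by
  refine isLittleO_iff.mpr fun ε hε => ?_
  obtain ⟨N, hN⟩ := eventually_atTop.mp (isLittleO_iff.mp hu (half_pos hε))
  set C := ∑ m ∈ Finset.range N, ‖u m‖
  have hbound : ∀ m, ‖u m‖ ≤ ε / 2 * m + C := by
    intro m
    rcases lt_or_ge m N with hm | hm
    · have := Finset.single_le_sum (fun k _ => norm_nonneg (u k)) (Finset.mem_range.mpr hm)
      nlinarith [(Nat.cast_nonneg m : (0 : ℝ) ≤ m)]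
    · have := hN m hm
      rw [Real.norm_natCast] at this
      linarith [Finset.sum_nonneg fun k (_ : k ∈ Finset.range N) => norm_nonneg (u k)]
  filter_upwards [eventually_ge_atTop ⌈2 * C / ε⌉₊] with n hn
  have hC : 2 * C / ε ≤ n := Nat.ceil_le.mp hn
  rw [div_le_iff₀ hε] at hC
  have han : (a n : ℝ) ≤ n := by exact_mod_cast ha n
  rw [Real.norm_natCast]
  nlinarith [hbound (a n)]

lemma Asymptotics.IsLittleO.of_abs_le_mul_add_one {J : ℕ → ℕ}
    (hJ : (fun n => (J n : ℝ)) =o[atTop] (fun n => (n : ℝ))) {D : ℕ → ℝ} (C : ℝ)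
    (hD : ∀ n, |D n| ≤ C * (J n + 1)) : D =o[atTop] (fun n => (n : ℝ)) :=
  (IsBigO.of_bound' (Eventually.of_forall fun n => (hD n).trans (le_abs_self _))).trans_isLittleO
    ((hJ.add (isLittleO_const_id_atTop (1 : ℝ)).natCast_atTop).const_mul_left C)

end asymptotics

theorem splicing_normal {α : Type*} [Fintype α] [DecidableEq α]
    (S T U : ℕ → α) (i : ℕ → ℕ) (hi0 : i 0 = 0) (hmono : StrictMono i)
    (hgap : ∀ j, i (j + 1) - i j ≤ i (j + 2) - i (j + 1))
    (hunb : ∀ M : ℕ, ∃ j, M < i (j + 1) - i j)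
    (hS : IsNormalSeq S) (hT : IsNormalSeq T)
    (hU : ∀ j, pre U (2 * i j) = interPre S T i j) :
    IsNormalSeq U := by
  intro w
  have hi : Monotone i := hmono.monotone
  have hblock : StrictMono fun j => 2 * i j := hmono.const_mul two_pos
  have hgrowth : (fun j : ℕ => (j : ℝ)) =o[atTop] (fun j => ((2 * i j : ℕ) : ℝ)) := by
    simpa using (isLittleO_of_monotone_gap hi (monotone_nat_of_le_succ hgap) hunb).const_mul_right
      two_ne_zero
  choose J hJ using fun n => hblock.exists_le_lt_succ (n := n) (by simp [hi0])
  choose a b hab hsplit using fun n => abs_occ_pre_sub_occ_le S T hi0 hi w hU (hJ n).1 (hJ n).2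
  have hsplito : (fun n => (occ w (pre U n) : ℝ) - occ w (pre S (a n)) - occ w (pre T (b n)))
      =o[atTop] (fun n => (n : ℝ)) :=
    (hblock.isLittleO_of_lt_succ hgrowth hJ).of_abs_le_mul_add_one (2 * w.length)
      fun n => by exact_mod_cast hsplit n
  have hSo := (isLittleO_sub_mul_iff_tendsto_div.mpr (hS w)).comp_le
    (fun n => (hab n).le.trans' (Nat.le_add_right _ _))
  have hTo := (isLittleO_sub_mul_iff_tendsto_div.mpr (hT w)).comp_le
    (fun n => (hab n).le.trans' (Nat.le_add_left _ _))
  rw [← isLittleO_sub_mul_iff_tendsto_div]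
  refine ((hsplito.add hSo).add hTo).congr_left fun n => ?_
  have hn : (a n : ℝ) + b n = n := by exact_mod_cast hab n
  rw [← hn]
  ring
end

section
/- Let G be a finite-state gambler over alphabet Σ that s-succeeds on a sequence S ∈ Σ^∞, where Σ ⊆ Σ'. Then there is a finite-state gambler G' over alphabet Σ' that t-succeeds on S (viewed as a sequence over Σ'), where t = s · (log|Σ|)/(log|Σ'|). Consequently, dim_FS^{(Σ')}(S) ≤ (log|Σ|/log|Σ'|) · dim_FS^{(Σ)}(S). -/
open Filter

/-- A finite-state gambler over the alphabet `A`: finitely many states, a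
transition function, and a rational betting function giving a probability
measure on `A` at each state. -/
structure FSG (A : Type) [Fintype A] where
  Q : Type
  fin : Finite Q
  q0 : Q
  δ : Q → A → Q
  β : Q → A → ℚ
  β_nonneg : ∀ q a, 0 ≤ β q a
  β_sum : ∀ q, ∑ a : A, β q a = 1

variable {A : Type} [Fintype A]

/-- The state reached after reading the string `w`. -/
def FSG.run (G : FSG A) (w : List A) : G.Q := w.foldl G.δ G.q0

/-- The martingale of the finite-state gambler `G`:
`d_G(λ) = 1` and `d_G(wa) = d_G(w) · β(δ(w))(a) · |A|`. -/
def FSG.mart (G : FSG A) (w : List A) : ℝ :=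
  ∏ i : Fin w.length, ((G.β (G.run (w.take i)) (w.get i) : ℝ) * (Fintype.card A : ℝ))

/-- The `s`-gale of `G`: `d_G^(s)(w) = |A|^((s-1)|w|) · d_G(w)`. -/
noncomputable def FSG.sgale (G : FSG A) (s : ℝ) (w : List A) : ℝ :=
  (Fintype.card A : ℝ) ^ ((s - 1) * (w.length : ℝ)) * G.mart w

/-- `G` `s`-succeeds on `S`: the `s`-gale is unbounded along prefixes of `S`
(equivalently, its limsup is `∞`). -/
def FSG.succeeds (G : FSG A) (s : ℝ) (S : ℕ → A) : Prop :=
  ∀ c : ℝ, ∃ n : ℕ, c < G.sgale s (pre S n)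

/-- The finite-state dimension of `S` over the alphabet `A`. -/
noncomputable def dimFS (S : ℕ → A) : ℝ :=
  sInf {s : ℝ | 0 ≤ s ∧ ∃ G : FSG A, G.succeeds s S}

/-! The gambler `G'` simulates `G` on letters of `A` and never bets on the new
letters, so along `S` it assigns every prefix the same probability as `G`. Only the
normalisation of the gale changes: `|A'|^{t n} = |A|^{s n}` exactly when
`t log |A'| = s log |A|`, and `log |A'| > 0` because success forces `|A| ≥ 2` (over a
one-letter alphabet every bet is the sure bet). -/

lemma pre_comp {α β : Type*} (f : α → β) (S : ℕ → α) (n : ℕ) :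
    pre (f ∘ S) n = (pre S n).map f := by
  simp [pre, List.map_ofFn]
  rfl

namespace FSG

variable {A' : Type} [Fintype A'] (G : FSG A)

def prob (w : List A) : ℝ :=
  ∏ i : Fin w.length, (G.β (G.run (w.take i)) (w.get i) : ℝ)

lemma mart_eq_prob_mul (w : List A) :
    G.mart w = G.prob w * (Fintype.card A : ℝ) ^ w.length := by
  rw [mart, prob, Finset.prod_mul_distrib, Finset.prod_const, Finset.card_univ, Fintype.card_fin]

lemma sgale_eq_prob_mul [Nonempty A] (s : ℝ) (w : List A) :
    G.sgale s w = G.prob w * (Fintype.card A : ℝ) ^ (s * w.length) := by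
  have hA : (0 : ℝ) < Fintype.card A := by exact_mod_cast Fintype.card_pos
  rw [sgale, mart_eq_prob_mul, ← Real.rpow_natCast, mul_left_comm, ← Real.rpow_add hA]
  ring_nf

lemma β_le_one (q : G.Q) (a : A) : G.β q a ≤ 1 :=
  G.β_sum q ▸ Finset.single_le_sum (fun b _ => G.β_nonneg q b) (Finset.mem_univ a)

lemma mart_nonneg (w : List A) : 0 ≤ G.mart w :=
  Finset.prod_nonneg fun _ _ => mul_nonneg (by exact_mod_cast G.β_nonneg _ _) (by positivity)

lemma sgale_le_one_of_card_eq_one (hA : Fintype.card A = 1) (s : ℝ) (w : List A) :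
    G.sgale s w ≤ 1 := by
  simp only [sgale, mart, hA, Nat.cast_one, Real.one_rpow, one_mul, mul_one]
  exact Finset.prod_le_one (fun _ _ => by simpa using G.β_nonneg _ _)
    fun _ _ => by exact_mod_cast G.β_le_one _ _

lemma one_lt_card_of_succeeds {s : ℝ} {S : ℕ → A} (h : G.succeeds s S) :
    1 < Fintype.card A := by
  have : 0 < Fintype.card A := Fintype.card_pos_iff.mpr ⟨S 0⟩
  refine lt_of_le_of_ne this fun hA => ?_
  obtain ⟨n, hn⟩ := h 1
  exact (G.sgale_le_one_of_card_eq_one hA.symm s (pre S n)).not_gt hn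

lemma succeeds_mono {s s' : ℝ} (hss : s ≤ s') {S : ℕ → A} (h : G.succeeds s S) :
    G.succeeds s' S := by
  have hA : (1 : ℝ) ≤ Fintype.card A := by exact_mod_cast Fintype.card_pos_iff.mpr ⟨S 0⟩
  intro c
  obtain ⟨n, hn⟩ := h c
  refine ⟨n, hn.trans_le (mul_le_mul_of_nonneg_right ?_ (G.mart_nonneg _))⟩
  exact Real.rpow_le_rpow_of_exponent_le hA (by gcongr)

open Classical in
/-- The paper's undefined transitions on letters outside the range of `ι` are modelled by
staying put; they are never taken along `ι ∘ S`. -/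
noncomputable def enlarge (ι : A → A') : FSG A' where
  Q := G.Q
  fin := G.fin
  q0 := G.q0
  δ q := Function.extend ι (G.δ q) fun _ => q
  β q a' := ∑ a with ι a = a', G.β q a
  β_nonneg q _ := Finset.sum_nonneg fun a _ => G.β_nonneg q a
  β_sum q := (Finset.sum_fiberwise _ ι _).trans (G.β_sum q)

variable {ι : A → A'} (hι : Function.Injective ι)
include hι

open Classical in
lemma enlarge_β_apply (q : G.Q) (a : A) : (G.enlarge ι).β q (ι a) = G.β q a :=
  Finset.sum_eq_single_of_mem a (Finset.mem_filter.2 ⟨Finset.mem_univ a, rfl⟩)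
    fun _ hb hba => (hba (hι (Finset.mem_filter.1 hb).2)).elim

lemma enlarge_run_map (w : List A) : (G.enlarge ι).run (w.map ι) = G.run w := by
  simp only [run, List.foldl_map]
  congr 1
  funext q a
  exact hι.extend_apply (G.δ q) (fun _ => q) a

lemma enlarge_prob_map (w : List A) : (G.enlarge ι).prob (w.map ι) = G.prob w := by
  refine Fintype.prod_equiv (finCongr (List.length_map ι)) _ _ fun i => ?_
  rw [← List.map_take, enlarge_run_map G hι, List.get_eq_getElem, List.getElem_map,
    enlarge_β_apply G hι]
  rfl

lemma enlarge_sgale_map [Nonempty A] {s t : ℝ}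
    (hst : t * Real.log (Fintype.card A') = s * Real.log (Fintype.card A)) (w : List A) :
    (G.enlarge ι).sgale t (w.map ι) = G.sgale s w := by
  have : Nonempty A' := Nonempty.map ι ‹_›
  have hA : (0 : ℝ) < Fintype.card A := by exact_mod_cast Fintype.card_pos
  have hA' : (0 : ℝ) < Fintype.card A' := by exact_mod_cast Fintype.card_pos
  rw [sgale_eq_prob_mul, sgale_eq_prob_mul, enlarge_prob_map G hι, List.length_map,
    Real.rpow_def_of_pos hA, Real.rpow_def_of_pos hA', ← mul_assoc, ← mul_assoc,
    mul_comm (Real.log _) t, hst, mul_comm s]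

lemma enlarge_succeeds {s : ℝ} {S : ℕ → A} (h : G.succeeds s S) :
    (G.enlarge ι).succeeds (s * Real.log (Fintype.card A) / Real.log (Fintype.card A'))
      (ι ∘ S) := by
  have : Nonempty A := ⟨S 0⟩
  have hA' : (1 : ℝ) < Fintype.card A' := by
    exact_mod_cast (G.one_lt_card_of_succeeds h).trans_le (Fintype.card_le_of_injective ι hι)
  have hst := div_mul_cancel₀ (s * Real.log (Fintype.card A)) (Real.log_pos hA').ne'
  intro c
  obtain ⟨n, hn⟩ := h c
  exact ⟨n, by rwa [pre_comp, enlarge_sgale_map G hι hst]⟩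

end FSG

lemma dimFS_comp_le {A' : Type} [Fintype A'] {ι : A → A'} (hι : Function.Injective ι)
    {S : ℕ → A} {s : ℝ} (G : FSG A) (h : G.succeeds s S) :
    dimFS (ι ∘ S) ≤ Real.log (Fintype.card A) / Real.log (Fintype.card A') * dimFS S := by
  have hA : (1 : ℝ) ≤ Fintype.card A := by exact_mod_cast (G.one_lt_card_of_succeeds h).le
  have hA' : (1 : ℝ) ≤ Fintype.card A' :=
    hA.trans (by exact_mod_cast Fintype.card_le_of_injective ι hι)
  set r := Real.log (Fintype.card A) / Real.log (Fintype.card A')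
  have hr : 0 ≤ r := div_nonneg (Real.log_nonneg hA) (Real.log_nonneg hA')
  have hne : {u : ℝ | 0 ≤ u ∧ ∃ G : FSG A, G.succeeds u S}.Nonempty :=
    ⟨max s 0, le_max_right s 0, G, G.succeeds_mono (le_max_left s 0) h⟩
  rw [dimFS, dimFS, ← smul_eq_mul, ← Real.sInf_smul_of_nonneg hr]
  refine csInf_le_csInf ⟨0, fun u hu => hu.1⟩ hne.smul_set ?_
  rintro _ ⟨u, ⟨hu, Gu, hGu⟩, rfl⟩
  refine ⟨mul_nonneg hr hu, Gu.enlarge ι, ?_⟩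
  convert Gu.enlarge_succeeds hι hGu using 1
  show r * u = _
  rw [mul_div_assoc, mul_comm]

theorem fsg_alphabet_enlargement_general {A A' : Type} [Fintype A] [Fintype A']
    (ι : A → A') (hι : Function.Injective ι)
    (S : ℕ → A) (s : ℝ) (G : FSG A) (h : G.succeeds s S) :
    (∃ G' : FSG A',
        G'.succeeds (s * Real.log (Fintype.card A) / Real.log (Fintype.card A')) (ι ∘ S)) ∧
      dimFS (ι ∘ S) ≤ Real.log (Fintype.card A) / Real.log (Fintype.card A') * dimFS S :=
  ⟨⟨G.enlarge ι, G.enlarge_succeeds hι h⟩, dimFS_comp_le hι G h⟩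

theorem fsg_alphabet_enlargement {A A' : Type} [Fintype A] [Fintype A']
    (hA : 2 ≤ Fintype.card A) (ι : A → A') (hι : Function.Injective ι)
    (S : ℕ → A) (s : ℝ) (G : FSG A) (h : G.succeeds s S) :
    (∃ G' : FSG A',
        G'.succeeds (s * Real.log (Fintype.card A) / Real.log (Fintype.card A')) (ι ∘ S)) ∧
      dimFS (ι ∘ S) ≤ Real.log (Fintype.card A) / Real.log (Fintype.card A') * dimFS S :=
  fsg_alphabet_enlargement_general ι hι S s G h
end
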